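/- arXiv:2310.09202 — 2 statements merged into one kernel-verified Lean document; each statement's English description precedes it below -/
import Mathlib

section
/- Under the same setting (A, A′ real symmetric, ∇ = (AX)ᵀ(AXW − Y), ∇′ = (A′X′)ᵀ(A′X′W − Y′)), the squared gradient-matching objective satisfies ‖∇ − ∇′‖_F² ≤ 2·‖W‖_F²·‖XᵀA²X − X′ᵀA′²X′‖_F² + 2·‖XᵀAY − X′ᵀA′Y′‖_F². -/
open Matrix
attribute [local instance] Matrix.frobeniusNormedAddCommGroup

/-- The Frobenius norm `‖M‖_F = sqrt(Σᵢⱼ Mᵢⱼ²)` of a real matrix. -/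
noncomputable def frobNorm {m n : ℕ} (M : Matrix (Fin m) (Fin n) ℝ) : ℝ :=
  Real.sqrt (∑ i, ∑ j, (M i j) ^ 2)


lemma frobNorm_eq_norm {m n : ℕ} (M : Matrix (Fin m) (Fin n) ℝ) :
    frobNorm M = ‖M‖ := by
  rw [Matrix.frobenius_norm_def, frobNorm, Real.sqrt_eq_rpow]
  norm_num [Real.norm_eq_abs, Real.rpow_two, sq_abs]

/-- For the gradients `∇ = (AX)ᵀ(AXW − Y)` and `∇′ = (A′X′)ᵀ(A′X′W − Y′)` of the one-layer
GCN MSE losses on the real graph `(A, X, Y)` and synthetic graph `(A′, X′, Y′)` (with `A`, `A′`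
symmetric), the squared gradient-matching objective satisfies
`‖∇ − ∇′‖_F² ≤ 2‖W‖_F²‖XᵀA²X − X′ᵀA′²X′‖_F² + 2‖XᵀAY − X′ᵀA′Y′‖_F²`. -/
theorem gradient_matching_squared_bound (N N' d c : ℕ)
    (A : Matrix (Fin N) (Fin N) ℝ) (hA : A.IsSymm)
    (A' : Matrix (Fin N') (Fin N') ℝ) (hA' : A'.IsSymm)
    (X : Matrix (Fin N) (Fin d) ℝ) (X' : Matrix (Fin N') (Fin d) ℝ)
    (Y : Matrix (Fin N) (Fin c) ℝ) (Y' : Matrix (Fin N') (Fin c) ℝ)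
    (W : Matrix (Fin d) (Fin c) ℝ) :
    frobNorm ((A * X)ᵀ * (A * X * W - Y) - (A' * X')ᵀ * (A' * X' * W - Y')) ^ 2
      ≤ 2 * frobNorm W ^ 2 * frobNorm (Xᵀ * A ^ 2 * X - X'ᵀ * A' ^ 2 * X') ^ 2
        + 2 * frobNorm (Xᵀ * A * Y - X'ᵀ * A' * Y') ^ 2 := by

  simp only [frobNorm_eq_norm]
  have key : (A * X)ᵀ * (A * X * W - Y) - (A' * X')ᵀ * (A' * X' * W - Y')
      = (Xᵀ * A ^ 2 * X - X'ᵀ * A' ^ 2 * X') * W - (Xᵀ * A * Y - X'ᵀ * A' * Y') := by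
    have h1 : Aᵀ = A := hA
    have h2 : A'ᵀ = A' := hA'
    simp only [Matrix.transpose_mul, h1, h2, sq, Matrix.mul_sub, Matrix.sub_mul,
      Matrix.mul_assoc]
    abel
  rw [key]
  set P := Xᵀ * A ^ 2 * X - X'ᵀ * A' ^ 2 * X'
  set Q := Xᵀ * A * Y - X'ᵀ * A' * Y'
  have h1 : ‖P * W - Q‖ ≤ ‖P‖ * ‖W‖ + ‖Q‖ :=
    (norm_sub_le _ _).trans (by gcongr; exact Matrix.frobenius_norm_mul P W)
  calc ‖P * W - Q‖ ^ 2 ≤ (‖P‖ * ‖W‖ + ‖Q‖) ^ 2 := by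
        gcongr
    _ ≤ 2 * (‖P‖ * ‖W‖) ^ 2 + 2 * ‖Q‖ ^ 2 := by nlinarith [sq_nonneg (‖P‖ * ‖W‖ - ‖Q‖)]
    _ = 2 * ‖W‖ ^ 2 * ‖P‖ ^ 2 + 2 * ‖Q‖ ^ 2 := by ring
end

section
/- Let L be a real symmetric N×N matrix with orthonormal eigenbasis u₁, …, u_N and eigenvalues λ₁, …, λ_N, and let g be a real polynomial. Set M = maxᵢ |g(λᵢ)| and assume M > 0. Then for every N×d real matrix X, the normalized target distribution M^{-2t} · Xᵀ g(L)^{2t} X converges, as t → ∞, to Σ_{i : |g(λᵢ)| = M} Xᵀ uᵢuᵢᵀ X; i.e., the target distribution is dominated by the eigenvalues whose filtered magnitude is maximal. -/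
open Matrix Filter
open scoped Classical

section Aux

variable {N : ℕ}

lemma vmv_mul_vmv (a b c e : Fin N → ℝ) :
    vecMulVec a b * vecMulVec c e = (b ⬝ᵥ c) • vecMulVec a e := by
  ext i j
  simp only [Matrix.mul_apply, vecMulVec_apply, Matrix.smul_apply, smul_eq_mul,
    dotProduct, Finset.sum_mul]
  exact Finset.sum_congr rfl fun k _ => by ring

lemma sum_proj_eq_one (u : Fin N → Fin N → ℝ)
    (horth : ∀ i j, u i ⬝ᵥ u j = if i = j then (1 : ℝ) else 0) :
    (∑ i, vecMulVec (u i) (u i)) = (1 : Matrix (Fin N) (Fin N) ℝ) := by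
  set U : Matrix (Fin N) (Fin N) ℝ := Matrix.of u with hU
  have h1 : U * Uᵀ = 1 := by
    ext i j
    simpa [Matrix.mul_apply, Matrix.one_apply, dotProduct, hU] using horth i j
  have h2 : Uᵀ * U = 1 := mul_eq_one_comm.mp h1
  ext a b
  have := congrArg (fun m : Matrix (Fin N) (Fin N) ℝ => m a b) h2
  simp only [Matrix.mul_apply, Matrix.transpose_apply, hU, Matrix.of_apply] at this
  simpa [Matrix.sum_apply, vecMulVec_apply] using this

lemma sum_smul_proj_mul (u : Fin N → Fin N → ℝ)
    (horth : ∀ i j, u i ⬝ᵥ u j = if i = j then (1 : ℝ) else 0)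
    (c e : Fin N → ℝ) :
    (∑ i, c i • vecMulVec (u i) (u i)) * (∑ j, e j • vecMulVec (u j) (u j))
      = ∑ i, (c i * e i) • vecMulVec (u i) (u i) := by
  rw [Finset.sum_mul]
  refine Finset.sum_congr rfl fun i _ => ?_
  rw [Finset.mul_sum]
  have : ∀ j ∈ Finset.univ, (c i • vecMulVec (u i) (u i)) * (e j • vecMulVec (u j) (u j))
      = if i = j then (c i * e i) • vecMulVec (u i) (u i) else 0 := by
    intro j _
    rw [Matrix.smul_mul, Matrix.mul_smul, vmv_mul_vmv, horth i j]
    by_cases h : i = j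
    · subst h; simp [smul_smul, mul_comm]
    · simp [h]
  rw [Finset.sum_congr rfl this]
  simp

lemma aeval_spectral (u : Fin N → Fin N → ℝ) (lam : Fin N → ℝ)
    (horth : ∀ i j, u i ⬝ᵥ u j = if i = j then (1 : ℝ) else 0)
    (L : Matrix (Fin N) (Fin N) ℝ)
    (hL : L = ∑ i, lam i • vecMulVec (u i) (u i))
    (g : Polynomial ℝ) :
    (Polynomial.aeval L) g = ∑ i, g.eval (lam i) • vecMulVec (u i) (u i) := by
  have hpow : ∀ k : ℕ, L ^ k = ∑ i, (lam i) ^ k • vecMulVec (u i) (u i) := by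
    intro k
    induction k with
    | zero => simp [sum_proj_eq_one u horth]
    | succ n ih =>
      rw [pow_succ, ih, hL, sum_smul_proj_mul u horth]
      refine Finset.sum_congr rfl fun i _ => ?_
      rw [pow_succ]
  rw [Polynomial.aeval_eq_sum_range]
  have : ∀ n ∈ Finset.range (g.natDegree + 1),
      g.coeff n • L ^ n = ∑ i, (g.coeff n * lam i ^ n) • vecMulVec (u i) (u i) := by
    intro n _
    rw [hpow n, Finset.smul_sum]
    refine Finset.sum_congr rfl fun i _ => ?_
    rw [smul_smul]
  rw [Finset.sum_congr rfl this, Finset.sum_comm]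
  refine Finset.sum_congr rfl fun i _ => ?_
  rw [← Finset.sum_smul]
  congr 1
  rw [Polynomial.eval_eq_sum_range]

end Aux

/-- Let `L = Σᵢ λᵢ uᵢuᵢᵀ` with orthonormal `uᵢ`, `g` a real polynomial, and
`M = maxᵢ |g(λᵢ)| > 0`. Then the normalized target distribution `M^{−2t}·Xᵀg(L)^{2t}X`
converges, as `t → ∞`, to `Σ_{i : |g(λᵢ)| = M} XᵀuᵢuᵢᵀX`: the target distribution is
dominated by the eigenvalues whose filtered magnitude is maximal. -/
theorem filtered_target_distribution_dominated_by_max (N d : ℕ)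
    (u : Fin N → Fin N → ℝ) (lam : Fin N → ℝ)
    (horth : ∀ i j, u i ⬝ᵥ u j = if i = j then (1 : ℝ) else 0)
    (L : Matrix (Fin N) (Fin N) ℝ)
    (hL : L = ∑ i, lam i • vecMulVec (u i) (u i))
    (g : Polynomial ℝ) (M : ℝ)
    (hM : IsGreatest (Set.range fun i : Fin N => |g.eval (lam i)|) M)
    (hMpos : 0 < M)
    (X : Matrix (Fin N) (Fin d) ℝ) :
    Tendsto
      (fun t : ℕ => (M ^ (2 * t))⁻¹ • (Xᵀ * ((Polynomial.aeval L) g) ^ (2 * t) * X))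
      atTop
      (nhds (∑ i : Fin N,
        if |g.eval (lam i)| = M then Xᵀ * vecMulVec (u i) (u i) * X else 0)) := by
  set e : Fin N → ℝ := fun i => g.eval (lam i) with he
  have hspec := aeval_spectral u lam horth L hL g
  -- powers of aeval L g
  have hpowk : ∀ k : ℕ, ((Polynomial.aeval L) g) ^ k
      = ∑ i, (e i) ^ k • vecMulVec (u i) (u i) := by
    intro k
    induction k with
    | zero => simp [sum_proj_eq_one u horth]
    | succ n ih =>
      rw [pow_succ, ih, hspec, sum_smul_proj_mul u horth]
      refine Finset.sum_congr rfl fun i _ => ?_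
      rw [pow_succ]
  -- rewrite the function
  have hfun : ∀ t : ℕ, (M ^ (2 * t))⁻¹ • (Xᵀ * ((Polynomial.aeval L) g) ^ (2 * t) * X)
      = ∑ i, ((e i / M) ^ 2) ^ t • (Xᵀ * vecMulVec (u i) (u i) * X) := by
    intro t
    rw [hpowk, Matrix.mul_sum, Matrix.sum_mul, Finset.smul_sum]
    refine Finset.sum_congr rfl fun i _ => ?_
    rw [Matrix.mul_smul, Matrix.smul_mul, smul_smul]
    congr 1
    rw [← pow_mul, div_pow, div_eq_inv_mul]
  simp only [hfun]
  refine tendsto_finset_sum _ fun i _ => ?_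
  by_cases h : |e i| = M
  · have h1 : (e i / M) ^ 2 = 1 := by
      have : (e i) ^ 2 = M ^ 2 := by
        rw [← sq_abs, h]
      rw [div_pow, this, div_self (by positivity)]
    rw [if_pos h]
    simp only [h1, one_pow, one_smul]
    exact tendsto_const_nhds
  · have hle : |e i| ≤ M := hM.2 ⟨i, rfl⟩
    have hlt : |e i| < M := lt_of_le_of_ne hle h
    have h0 : (0:ℝ) ≤ (e i / M) ^ 2 := sq_nonneg _
    have h1 : (e i / M) ^ 2 < 1 := by
      rw [div_pow, div_lt_one (by positivity)]
      nlinarith [sq_abs (e i), abs_nonneg (e i)]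
    rw [if_neg h]
    have := (tendsto_pow_atTop_nhds_zero_of_lt_one h0 h1).smul_const
      (Xᵀ * vecMulVec (u i) (u i) * X)
    simpa using this
end
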